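/- Let K and K̃ be real symmetric positive semidefinite n×n matrices with K - K̃ positive semidefinite, and suppose ‖K - K̃‖ ≤ 2·√(k(n-k)+1)·σ_{k+1}(K), where σ_{k+1}(K) = λ_{k+1}(K) is the (k+1)-st largest eigenvalue of K and 0 ≤ k ≤ n. Let β > 0 and S = (K̃ + βI)^{-1/2}(K + βI)(K̃ + βI)^{-1/2}. Then I ≤ S ≤ (1 + 2·λ_{k+1}(K)·√(k(n-k)+1)/β)·I ≤ (1 + 2·λ_{k+1}(K)·(n/2 + 1)/β)·I in the Loewner order; in particular the condition number of S is at most 1 + 2·λ_{k+1}(K)·(n/2+1)/β. -/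

import Mathlib

/-!
Conjugation by `R = (K̃ + βI)^{-1/2}` preserves the Loewner order and sends `K̃ + βI` to `I`.
Hence the bounds on `S = R (K + βI) R` follow from `K̃ + βI ≤ K + βI ≤ (1 + t/β)(K̃ + βI)` with
`t = 2 λ_{k+1}(K) √(k(n-k)+1)`: the left inequality is `K̃ ≤ K`, the right one follows from
`K - K̃ ≤ ‖K - K̃‖ I ≤ t I` and `0 ≤ K̃`. The eigenvalues of `S` then lie in `[1, 1 + t/β]`.
-/

open scoped Matrix.Norms.L2Operator
open Matrix

open scoped ComplexOrder in
/-- The square root of a positive semidefinite matrix, as `Matrix.PosSemidef.sqrt` was defined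
in Mathlib (removed since, in favour of `CFC.sqrt`). -/
noncomputable def Matrix.PosSemidef.sqrt {n 𝕜 : Type*} [Fintype n] [DecidableEq n] [RCLike 𝕜]
    {A : Matrix n n 𝕜} (hA : A.PosSemidef) : Matrix n n 𝕜 :=
  hA.1.eigenvectorUnitary.1 * diagonal ((↑) ∘ Real.sqrt ∘ hA.1.eigenvalues) *
    (star hA.1.eigenvectorUnitary : Matrix n n 𝕜)

open scoped MatrixOrder ComplexOrder

section StarOrderedRing

variable {A : Type*} [Ring A] [StarRing A] [PartialOrder A] [StarOrderedRing A]

theorem one_le_conj_of_le {r a b : A} (hr : IsSelfAdjoint r) (hra : r * a * r = 1) (hab : a ≤ b) :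
    1 ≤ r * b * r := by
  simpa [hr.star_eq, hra] using star_left_conjugate_le_conjugate hab r

theorem conj_le_smul_one_of_le_smul [Algebra ℝ A] {r a b : A} (hr : IsSelfAdjoint r)
    (hra : r * a * r = 1) {c : ℝ} (hbc : b ≤ c • a) : r * b * r ≤ c • 1 := by
  simpa [hr.star_eq, mul_smul_comm, smul_mul_assoc, hra] using
    star_left_conjugate_le_conjugate hbc r

end StarOrderedRing

namespace Matrix

variable {n 𝕜 : Type*} [Fintype n] [DecidableEq n] [RCLike 𝕜]

theorem PosSemidef.sqrt_eq_cfcSqrt {A : Matrix n n 𝕜} (hA : A.PosSemidef) :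
    hA.sqrt = CFC.sqrt A := by
  rw [CFC.sqrt_eq_cfc, cfc_nnreal_eq_real _ A, hA.1.cfc_eq, IsHermitian.cfc,
    Unitary.conjStarAlgAut_apply, PosSemidef.sqrt]
  congr 3
  funext i
  simp [hA.eigenvalues_nonneg i]

theorem PosDef.inv_sqrt_mul_self_mul_inv_sqrt {A : Matrix n n 𝕜} (hA : A.PosDef)
    (hA' : A.PosSemidef) : hA'.sqrt⁻¹ * A * hA'.sqrt⁻¹ = 1 := by
  rw [hA'.sqrt_eq_cfcSqrt]
  have hRR : CFC.sqrt A * CFC.sqrt A = A := CFC.sqrt_mul_sqrt_self A hA'.nonneg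
  have hdet : IsUnit (CFC.sqrt A).det := by
    rw [isUnit_iff_ne_zero]
    intro h
    exact hA.det_pos.ne' (by rw [← hRR, det_mul, h, mul_zero])
  generalize CFC.sqrt A = R at hRR hdet ⊢
  rw [← hRR, ← mul_assoc, nonsing_inv_mul _ hdet, one_mul, mul_nonsing_inv _ hdet]

theorem PosSemidef.isSelfAdjoint_inv_sqrt {A : Matrix n n 𝕜} (hA : A.PosSemidef) :
    IsSelfAdjoint hA.sqrt⁻¹ := by
  rw [hA.sqrt_eq_cfcSqrt]
  exact (CFC.sqrt_nonneg A).posSemidef.isHermitian.inv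

theorem IsHermitian.le_smul_one_of_norm_le [Nonempty n] {D : Matrix n n 𝕜} (hD : D.IsHermitian)
    {t : ℝ} (ht : ‖D‖ ≤ t) : D ≤ t • 1 := by
  rw [← Algebra.algebraMap_eq_smul_one, le_algebraMap_iff_spectrum_le hD.isSelfAdjoint]
  intro x hx
  have hx' : (x : 𝕜) ∈ spectrum 𝕜 D := (spectrum.algebraMap_mem_iff 𝕜).2 hx
  calc x ≤ ‖(x : 𝕜)‖ := by simpa using le_abs_self x
    _ ≤ ‖D‖ := spectrum.norm_le_norm_of_mem hx'
    _ ≤ t := ht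

theorem IsHermitian.eigenvalues_mem_Icc {S : Matrix n n 𝕜} (hS : S.IsHermitian) {a b : ℝ}
    (ha : a • 1 ≤ S) (hb : S ≤ b • 1) (i : n) : hS.eigenvalues i ∈ Set.Icc a b := by
  rw [← Algebra.algebraMap_eq_smul_one] at ha hb
  have hi := hS.eigenvalues_mem_spectrum_real i
  exact ⟨(algebraMap_le_iff_le_spectrum hS.isSelfAdjoint).1 ha _ hi,
    (le_algebraMap_iff_spectrum_le hS.isSelfAdjoint).1 hb _ hi⟩

end Matrix

theorem ciSup_div_ciInf_le {ι : Type*} [Finite ι] [Nonempty ι] {f : ι → ℝ} {a b : ℝ}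
    (ha : 0 < a) (hf : ∀ i, f i ∈ Set.Icc a b) : (⨆ i, f i) / (⨅ i, f i) ≤ b / a :=
  div_le_div₀ (ha.le.trans ((hf (Classical.arbitrary ι)).1.trans (hf _).2))
    (ciSup_le fun i => (hf i).2) ha (le_ciInf fun i => (hf i).1)

theorem Real.sqrt_mul_sub_add_one_le {n k : ℝ} (hn : 0 ≤ n) :
    √(k * (n - k) + 1) ≤ n / 2 + 1 :=
  Real.sqrt_le_iff.2 ⟨by positivity, by nlinarith [sq_nonneg (n - 2 * k)]⟩

theorem add_smul_le_one_add_div_smul {M : Type*} [AddCommGroup M] [PartialOrder M]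
    [IsOrderedAddMonoid M] [Module ℝ M] [PosSMulMono ℝ M] {a b u : M} {t β : ℝ} (ha : 0 ≤ a)
    (ht : 0 ≤ t) (hβ : 0 < β) (hab : b - a ≤ t • u) :
    b + β • u ≤ (1 + t / β) • (a + β • u) := by
  have key : (1 + t / β) • (a + β • u) = b + β • u + ((t / β) • a + (t • u - (b - a))) := by
    match_scalars <;> field_simp <;> ring
  rw [key]
  exact le_add_of_nonneg_right (add_nonneg (smul_nonneg (by positivity) ha) (sub_nonneg.2 hab))

theorem stmt15_general {n k : ℕ} (hk : k < n)
    (K Kt : Matrix (Fin n) (Fin n) ℝ)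
    (hKt : Kt.PosSemidef)
    (hdiff : (K - Kt).PosSemidef)
    (μ : Fin n → ℝ)
    (hnorm : ‖K - Kt‖ ≤ 2 * Real.sqrt ((k : ℝ) * ((n : ℝ) - (k : ℝ)) + 1) * μ ⟨k, hk⟩)
    (β : ℝ) (hβ : 0 < β)
    (h₁ : (Kt + β • (1 : Matrix (Fin n) (Fin n) ℝ)).PosSemidef)
    (S : Matrix (Fin n) (Fin n) ℝ)
    (hS : S = h₁.sqrt⁻¹ * (K + β • (1 : Matrix (Fin n) (Fin n) ℝ)) * h₁.sqrt⁻¹) :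
    (S - 1).PosSemidef ∧
    ((1 + 2 * μ ⟨k, hk⟩ * Real.sqrt ((k : ℝ) * ((n : ℝ) - (k : ℝ)) + 1) / β)
        • (1 : Matrix (Fin n) (Fin n) ℝ) - S).PosSemidef ∧
    ((1 + 2 * μ ⟨k, hk⟩ * ((n : ℝ) / 2 + 1) / β) • (1 : Matrix (Fin n) (Fin n) ℝ)
        - (1 + 2 * μ ⟨k, hk⟩ * Real.sqrt ((k : ℝ) * ((n : ℝ) - (k : ℝ)) + 1) / β)
            • (1 : Matrix (Fin n) (Fin n) ℝ)).PosSemidef ∧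
    ∀ (hSh : S.IsHermitian),
      (∀ i, hSh.eigenvalues i ∈ Set.Icc 1 (1 + 2 * μ ⟨k, hk⟩ * ((n : ℝ) / 2 + 1) / β)) ∧
      (⨆ i, hSh.eigenvalues i) / (⨅ i, hSh.eigenvalues i)
        ≤ 1 + 2 * μ ⟨k, hk⟩ * ((n : ℝ) / 2 + 1) / β := by
  have : Nonempty (Fin n) := ⟨⟨k, hk⟩⟩
  set σ := μ ⟨k, hk⟩
  set s := √((k : ℝ) * ((n : ℝ) - (k : ℝ)) + 1)
  have hkn : (k : ℝ) ≤ n := by exact_mod_cast hk.le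
  have hs : 1 ≤ s := Real.one_le_sqrt.2 (by nlinarith [(k.cast_nonneg : (0 : ℝ) ≤ k)])
  have ht : 0 ≤ 2 * σ * s := by nlinarith [norm_nonneg (K - Kt)]
  have hσ : 0 ≤ σ := by nlinarith
  have hA : (Kt + β • 1).PosDef := PosDef.posSemidef_add hKt (PosDef.one.smul hβ)
  have hr := h₁.isSelfAdjoint_inv_sqrt
  have hra := hA.inv_sqrt_mul_self_mul_inv_sqrt h₁
  have hlower : Kt + β • 1 ≤ K + β • 1 := add_le_add_left (le_iff.2 hdiff) _
  have hupper : K + β • 1 ≤ (1 + 2 * σ * s / β) • (Kt + β • 1) :=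
    add_smul_le_one_add_div_smul hKt.nonneg ht hβ
      (hdiff.isHermitian.le_smul_one_of_norm_le (by linarith))
  have hc : 1 + 2 * σ * s / β ≤ 1 + 2 * σ * ((n : ℝ) / 2 + 1) / β := by
    gcongr
    exact Real.sqrt_mul_sub_add_one_le n.cast_nonneg
  have h1 : 1 ≤ S := hS ▸ one_le_conj_of_le hr hra hlower
  have h2 : S ≤ (1 + 2 * σ * s / β) • 1 := hS ▸ conj_le_smul_one_of_le_smul hr hra hupper
  have h3 : (1 + 2 * σ * s / β) • (1 : Matrix (Fin n) (Fin n) ℝ)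
      ≤ (1 + 2 * σ * ((n : ℝ) / 2 + 1) / β) • 1 :=
    smul_le_smul_of_nonneg_right hc PosSemidef.one.nonneg
  refine ⟨h1, h2, h3, fun hSh => ?_⟩
  have hI := hSh.eigenvalues_mem_Icc (by rwa [one_smul]) (h2.trans h3)
  exact ⟨hI, by simpa using ciSup_div_ciInf_le one_pos hI⟩

/-- If `K, K̃` are real symmetric PSD with `K - K̃` PSD and
`‖K - K̃‖ ≤ 2 √(k(n-k)+1) σ_{k+1}(K)` (with `σ_{k+1}(K) = λ_{k+1}(K)`, eigenvalues in
descending order `μ`, `k < n`), `β > 0`, and `S = (K̃ + βI)^{-1/2} (K + βI) (K̃ + βI)^{-1/2}`,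
then `I ≤ S ≤ (1 + 2 λ_{k+1}(K) √(k(n-k)+1)/β) I ≤ (1 + 2 λ_{k+1}(K) (n/2+1)/β) I` in the
Loewner order; in particular the condition number of `S` is at most
`1 + 2 λ_{k+1}(K) (n/2+1)/β`. -/
theorem stmt15 {n k : ℕ} (hk : k < n)
    (K Kt : Matrix (Fin n) (Fin n) ℝ)
    (hK : K.PosSemidef) (hKt : Kt.PosSemidef)
    (hdiff : (K - Kt).PosSemidef)
    (μ : Fin n → ℝ) (hμanti : Antitone μ)
    (hμ : ∃ e : Equiv.Perm (Fin n), ∀ i, μ i = hK.isHermitian.eigenvalues (e i))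
    (hnorm : ‖K - Kt‖ ≤ 2 * Real.sqrt ((k : ℝ) * ((n : ℝ) - (k : ℝ)) + 1) * μ ⟨k, hk⟩)
    (β : ℝ) (hβ : 0 < β)
    (h₁ : (Kt + β • (1 : Matrix (Fin n) (Fin n) ℝ)).PosSemidef)
    (S : Matrix (Fin n) (Fin n) ℝ)
    (hS : S = h₁.sqrt⁻¹ * (K + β • (1 : Matrix (Fin n) (Fin n) ℝ)) * h₁.sqrt⁻¹) :
    (S - 1).PosSemidef ∧
    ((1 + 2 * μ ⟨k, hk⟩ * Real.sqrt ((k : ℝ) * ((n : ℝ) - (k : ℝ)) + 1) / β)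
        • (1 : Matrix (Fin n) (Fin n) ℝ) - S).PosSemidef ∧
    ((1 + 2 * μ ⟨k, hk⟩ * ((n : ℝ) / 2 + 1) / β) • (1 : Matrix (Fin n) (Fin n) ℝ)
        - (1 + 2 * μ ⟨k, hk⟩ * Real.sqrt ((k : ℝ) * ((n : ℝ) - (k : ℝ)) + 1) / β)
            • (1 : Matrix (Fin n) (Fin n) ℝ)).PosSemidef ∧
    ∀ (hSh : S.IsHermitian),
      (∀ i, hSh.eigenvalues i ∈ Set.Icc 1 (1 + 2 * μ ⟨k, hk⟩ * ((n : ℝ) / 2 + 1) / β)) ∧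
      (⨆ i, hSh.eigenvalues i) / (⨅ i, hSh.eigenvalues i)
        ≤ 1 + 2 * μ ⟨k, hk⟩ * ((n : ℝ) / 2 + 1) / β :=
  stmt15_general hk K Kt hKt hdiff μ hnorm β hβ h₁ S hS
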